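/- Let f ∈ ℤ^{m|n}_+ with r = #f. Then the maps θ ↦ L_θ(f) and θ ↦ R_θ(f) are injective on {0,1}^r; equivalently, each of the sets {L_θ(f) : θ ∈ {0,1}^r} and {R_θ(f) : θ ∈ {0,1}^r} contains exactly 2^r distinct elements. -/

import Mathlib

open Finset

noncomputable def IdxSet (m n : ℕ) : Finset ℤ := Finset.Icc (-(m:ℤ)) (-1) ∪ Finset.Icc 1 (n:ℤ)

abbrev Idx (m n : ℕ) := {i : ℤ // i ∈ IdxSet m n}

abbrev Zmn (m n : ℕ) := Idx m n → ℤ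

def isgn {m n : ℕ} (i : Idx m n) : ℤ := if 0 < (i:ℤ) then 1 else -1

noncomputable def wtF {m n : ℕ} (f : Zmn m n) : ℤ →₀ ℤ :=
  ∑ i : Idx m n, isgn i • Finsupp.single (f i) (1:ℤ)

noncomputable def wtFrom {m n : ℕ} (f : Zmn m n) (j : Idx m n) : ℤ →₀ ℤ :=
  ∑ i : Idx m n, if (j:ℤ) ≤ (i:ℤ) then isgn i • Finsupp.single (f i) (1:ℤ) else 0

def domLE (μ ν : ℤ →₀ ℤ) : Prop :=
  ∃ c : ℤ →₀ ℕ,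
    ν - μ = c.sum fun a k => (k:ℤ) • (Finsupp.single a (1:ℤ) - Finsupp.single (a+1) (1:ℤ))

def bruhatLE {m n : ℕ} (g f : Zmn m n) : Prop :=
  wtF g = wtF f ∧ ∀ j : Idx m n, domLE (wtFrom g j) (wtFrom f j)

noncomputable def atyp {m n : ℕ} (f : Zmn m n) : ℕ :=
  (m + n - ∑ a ∈ (wtF f).support, (wtF f a).natAbs) / 2

def typicalZ {m n : ℕ} (f : Zmn m n) : Prop := atyp f = 0

def antidominantZ {m n : ℕ} (f : Zmn m n) : Prop :=
  ∀ i j : Idx m n, (i:ℤ) ≤ (j:ℤ) →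
    ((j:ℤ) < 0 → f j ≤ f i) ∧ (0 < (i:ℤ) → f i ≤ f j)

def dominantZ {m n : ℕ} (f : Zmn m n) : Prop :=
  ∀ i j : Idx m n, (i:ℤ) < (j:ℤ) →
    ((j:ℤ) < 0 → f i < f j) ∧ (0 < (i:ℤ) → f j < f i)

def dvec {m n : ℕ} (i : Idx m n) : Zmn m n := fun j => if j = i then isgn i else 0

def pairFamily {m n : ℕ} (f : Zmn m n) (r : ℕ) (I J : Fin r → Idx m n) : Prop :=
  StrictMono (fun s => ((I s : ℤ))) ∧ StrictAnti (fun s => ((J s : ℤ))) ∧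
  (∀ s, (I s : ℤ) < 0) ∧ (∀ s, 0 < (J s : ℤ)) ∧ ∀ s, f (I s) = f (J s)

def blockPerm {m n : ℕ} (e : Equiv.Perm (Idx m n)) : Prop :=
  ∀ i : Idx m n, 0 < (i:ℤ) ↔ 0 < ((e i : ℤ))

def conjDom {m n : ℕ} (f : Zmn m n) : Prop :=
  ∃ e : Equiv.Perm (Idx m n), blockPerm e ∧ dominantZ fun i => f (e i)

open Classical in
noncomputable def domConj {m n : ℕ} (f : Zmn m n) : Zmn m n :=
  if h : conjDom f then fun i => f (h.choose i) else f

open Classical in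
noncomputable def Lop (m n : ℕ) (i j : Idx m n) (f : Zmn m n) : Zmn m n :=
  f - (sInf {a : ℕ | 0 < a ∧ conjDom (f - a • (dvec i - dvec j)) ∧
      ∀ k l : Idx m n, (i:ℤ) < (k:ℤ) → (k:ℤ) < 0 → 0 < (l:ℤ) → (l:ℤ) < (j:ℤ) →
        f k = f l → conjDom (Lop m n k l f - a • (dvec i - dvec j))}) •
    (dvec i - dvec j)
termination_by ((j:ℤ) - (i:ℤ)).toNat
decreasing_by
  simp_wf
  refine ⟨by omega, ?_⟩
  exact Subtype.coe_lt_coe.mp (by omega)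

open Classical in
noncomputable def Rop (m n : ℕ) (i j : Idx m n) (f : Zmn m n) : Zmn m n :=
  f + (sInf {b : ℕ | 0 < b ∧ conjDom (f + b • (dvec i - dvec j)) ∧
      ∀ k l : Idx m n, (k:ℤ) < (i:ℤ) → (j:ℤ) < (l:ℤ) →
        f k = f l → conjDom (Rop m n k l f + b • (dvec i - dvec j))}) •
    (dvec i - dvec j)
termination_by (((i:ℤ) + (m:ℤ)).toNat + ((n:ℤ) - (j:ℤ)).toNat)
decreasing_by
  simp_wf
  have hk := k.2
  have hl := l.2
  simp only [IdxSet, Finset.mem_union, Finset.mem_Icc] at hk hl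
  omega

def applyFwd {m n r : ℕ} (ops : Fin r → Zmn m n → Zmn m n) (f : Zmn m n) : Zmn m n :=
  (List.finRange r).foldl (fun g s => ops s g) f

def applyBwd {m n r : ℕ} (ops : Fin r → Zmn m n → Zmn m n) (f : Zmn m n) : Zmn m n :=
  (List.finRange r).reverse.foldl (fun g s => ops s g) f

noncomputable def Ltheta {m n r : ℕ} (I J : Fin r → Idx m n) (θ : Fin r → ℕ) (f : Zmn m n) : Zmn m n :=
  domConj (applyFwd (fun s => (Lop m n (I s) (J s))^[θ s]) f)

noncomputable def Ltheta' {m n r : ℕ} (I J : Fin r → Idx m n) (θ : Fin r → ℕ) (f : Zmn m n) : Zmn m n :=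
  domConj (applyBwd (fun s => (Lop m n (I s) (J s))^[θ s]) f)

noncomputable def Rtheta {m n r : ℕ} (I J : Fin r → Idx m n) (θ : Fin r → ℕ) (f : Zmn m n) : Zmn m n :=
  domConj (applyBwd (fun s => (Rop m n (I s) (J s))^[θ s]) f)

noncomputable def Rtheta' {m n r : ℕ} (I J : Fin r → Idx m n) (θ : Fin r → ℕ) (f : Zmn m n) : Zmn m n :=
  domConj (applyFwd (fun s => (Rop m n (I s) (J s))^[θ s]) f)

def w0idx {m n : ℕ} (i : Idx m n) : Idx m n :=
  if _h : (i:ℤ) < 0 then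
    ⟨-(m:ℤ) - 1 - (i:ℤ), by
      have h2 := i.2
      simp only [IdxSet, Finset.mem_union, Finset.mem_Icc] at h2 ⊢
      omega⟩
  else
    ⟨(n:ℤ) + 1 - (i:ℤ), by
      have h2 := i.2
      simp only [IdxSet, Finset.mem_union, Finset.mem_Icc] at h2 ⊢
      omega⟩

def wconj {m n : ℕ} (f : Zmn m n) : Zmn m n := fun i => f (w0idx i)

def sigval {m n : ℕ} (f : Zmn m n) (a : ℤ) (i : Idx m n) : ℤ :=
  if (0 < (i:ℤ) ∧ f i = a) ∨ ((i:ℤ) < 0 ∧ f i = a + 1) then 1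
  else if (0 < (i:ℤ) ∧ f i = a + 1) ∨ ((i:ℤ) < 0 ∧ f i = a) then -1
  else 0

noncomputable def idxList (m n : ℕ) : List (Idx m n) :=
  ((IdxSet m n).sort (· ≤ ·)).attach.map fun x =>
    ⟨x.1, by have := x.2; rwa [Finset.mem_sort] at this⟩

def redStep {m n : ℕ} (f : Zmn m n) (a : ℤ)
    (st : List (Idx m n) × List (Idx m n)) (p : Idx m n) :
    List (Idx m n) × List (Idx m n) :=
  if sigval f a p = 1 then (st.1, p :: st.2)
  else if sigval f a p = -1 then
    match st.2 with
    | [] => (st.1 ++ [p], [])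
    | _ :: t => (st.1, t)
  else st

noncomputable def redState {m n : ℕ} (f : Zmn m n) (a : ℤ) : List (Idx m n) × List (Idx m n) :=
  (idxList m n).foldl (redStep f a) ([], [])

noncomputable def dualRedState {m n : ℕ} (f : Zmn m n) (a : ℤ) : List (Idx m n) × List (Idx m n) :=
  (idxList m n).reverse.foldl (redStep f a) ([], [])

noncomputable def epsN {m n : ℕ} (f : Zmn m n) (a : ℤ) : ℕ := (redState f a).1.length
noncomputable def phiN {m n : ℕ} (f : Zmn m n) (a : ℤ) : ℕ := (redState f a).2.length
noncomputable def epsStarN {m n : ℕ} (f : Zmn m n) (a : ℤ) : ℕ := (dualRedState f a).1.length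
noncomputable def phiStarN {m n : ℕ} (f : Zmn m n) (a : ℤ) : ℕ := (dualRedState f a).2.length

noncomputable def EtilP {m n : ℕ} (f : Zmn m n) (a : ℤ) : Option (Zmn m n) :=
  ((redState f a).1.getLast?).map fun p => f - dvec p
noncomputable def FtilP {m n : ℕ} (f : Zmn m n) (a : ℤ) : Option (Zmn m n) :=
  ((redState f a).2.getLast?).map fun p => f + dvec p
noncomputable def EtilStar {m n : ℕ} (f : Zmn m n) (a : ℤ) : Option (Zmn m n) :=
  ((dualRedState f a).1.getLast?).map fun p => f - dvec p
noncomputable def FtilStar {m n : ℕ} (f : Zmn m n) (a : ℤ) : Option (Zmn m n) :=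
  ((dualRedState f a).2.getLast?).map fun p => f + dvec p

noncomputable def Etil {m n : ℕ} (f : Zmn m n) (a : ℤ) : Option (Zmn m n) :=
  (EtilP (wconj f) a).map wconj
noncomputable def Ftil {m n : ℕ} (f : Zmn m n) (a : ℤ) : Option (Zmn m n) :=
  (FtilP (wconj f) a).map wconj
noncomputable def epsC {m n : ℕ} (f : Zmn m n) (a : ℤ) : ℕ := epsN (wconj f) a
noncomputable def phiC {m n : ℕ} (f : Zmn m n) (a : ℤ) : ℕ := phiN (wconj f) a


section AuxDev

variable {m n : ℕ}

lemma idx_sign (i : Idx m n) : (i:ℤ) < 0 ∨ 0 < (i:ℤ) := by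
  have h := i.2
  simp only [IdxSet, Finset.mem_union, Finset.mem_Icc] at h
  omega

lemma idx_neg_iff (i : Idx m n) : (i:ℤ) < 0 ↔ ¬ 0 < (i:ℤ) := by
  have := idx_sign i; constructor <;> intro h <;> omega

/-- Injectivity on the negative block. -/
def NegInj (g : Zmn m n) : Prop :=
  ∀ k₁ k₂ : Idx m n, (k₁:ℤ) < 0 → (k₂:ℤ) < 0 → g k₁ = g k₂ → k₁ = k₂

/-- Injectivity on the positive block. -/
def PosInj (g : Zmn m n) : Prop :=
  ∀ k₁ k₂ : Idx m n, 0 < (k₁:ℤ) → 0 < (k₂:ℤ) → g k₁ = g k₂ → k₁ = k₂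

lemma dominantZ.negInj {g : Zmn m n} (h : dominantZ g) : NegInj g := by
  intro k₁ k₂ h₁ h₂ hg
  by_contra hne
  have hne' : (k₁:ℤ) ≠ (k₂:ℤ) := fun hc => hne (Subtype.ext hc)
  rcases lt_or_gt_of_ne hne' with hlt | hlt
  · exact absurd hg (ne_of_lt ((h k₁ k₂ hlt).1 h₂))
  · exact absurd hg.symm (ne_of_lt ((h k₂ k₁ hlt).1 h₁))

lemma dominantZ.posInj {g : Zmn m n} (h : dominantZ g) : PosInj g := by
  intro k₁ k₂ h₁ h₂ hg
  by_contra hne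
  have hne' : (k₁:ℤ) ≠ (k₂:ℤ) := fun hc => hne (Subtype.ext hc)
  rcases lt_or_gt_of_ne hne' with hlt | hlt
  · exact absurd hg.symm (ne_of_lt ((h k₁ k₂ hlt).2 h₁))
  · exact absurd hg (ne_of_lt ((h k₂ k₁ hlt).2 h₂))

lemma blockPerm.symm {e : Equiv.Perm (Idx m n)} (h : blockPerm e) : blockPerm e.symm := by
  intro i
  have := h (e.symm i)
  simpa using this.symm

lemma conjDom.negInj {g : Zmn m n} (h : conjDom g) : NegInj g := by
  obtain ⟨e, hb, hd⟩ := h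
  intro k₁ k₂ h₁ h₂ hg
  have hd' : NegInj (fun i => g (e i)) := dominantZ.negInj hd
  have hb' := blockPerm.symm hb
  have e₁ : (e.symm k₁ : Idx m n) = e.symm k₁ := rfl
  have hn₁ : ((e.symm k₁ : Idx m n) : ℤ) < 0 := by
    rw [idx_neg_iff]; intro hc
    rw [idx_neg_iff] at h₁; exact h₁ ((hb' k₁).mpr hc)
  have hn₂ : ((e.symm k₂ : Idx m n) : ℤ) < 0 := by
    rw [idx_neg_iff]; intro hc
    rw [idx_neg_iff] at h₂; exact h₂ ((hb' k₂).mpr hc)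
  have := hd' (e.symm k₁) (e.symm k₂) hn₁ hn₂ (by simpa using hg)
  have : e (e.symm k₁) = e (e.symm k₂) := by rw [this]
  simpa using this

lemma conjDom.posInj {g : Zmn m n} (h : conjDom g) : PosInj g := by
  obtain ⟨e, hb, hd⟩ := h
  intro k₁ k₂ h₁ h₂ hg
  have hd' : PosInj (fun i => g (e i)) := dominantZ.posInj hd
  have hb' := blockPerm.symm hb
  have hn₁ : 0 < ((e.symm k₁ : Idx m n) : ℤ) := (hb' k₁).mp h₁
  have hn₂ : 0 < ((e.symm k₂ : Idx m n) : ℤ) := (hb' k₂).mp h₂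
  have := hd' (e.symm k₁) (e.symm k₂) hn₁ hn₂ (by simpa using hg)
  have : e (e.symm k₁) = e (e.symm k₂) := by rw [this]
  simpa using this

/-- Sorting lemma: any injective integer-valued function on a finite linear order can be
permuted to be strictly monotone. -/
lemma exists_sort_perm {α : Type*} [Fintype α] [LinearOrder α] (h : α → ℤ)
    (hinj : Function.Injective h) : ∃ π : Equiv.Perm α, StrictMono (h ∘ π) := by
  classical
  let e := monoEquivOfFin α rfl
  let f : Fin (Fintype.card α) → ℤ := h ∘ e
  let σ := Tuple.sort f
  have hmono : Monotone (f ∘ σ) := Tuple.monotone_sort f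
  have hinj' : Function.Injective (f ∘ σ) :=
    (hinj.comp e.injective).comp σ.injective
  have hsm : StrictMono (f ∘ σ) := hmono.strictMono_of_injective hinj'
  refine ⟨(e.symm.toEquiv.trans (σ.trans e.toEquiv)), ?_⟩
  intro a b hab
  have : e.symm a < e.symm b := e.symm.strictMono hab
  exact hsm this

lemma conjDom_of_inj {g : Zmn m n} (hneg : NegInj g) (hpos : PosInj g) : conjDom g := by
  classical
  set p : Idx m n → Prop := fun i => 0 < (i:ℤ) with hp
  have hNinj : Function.Injective (fun k : {i : Idx m n // ¬ p i} => g k.1) := by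
    intro a b hab
    exact Subtype.ext (hneg a.1 b.1 ((idx_neg_iff _).2 a.2) ((idx_neg_iff _).2 b.2) hab)
  have hPinj : Function.Injective (fun k : {i : Idx m n // p i} => -(g k.1)) := by
    intro a b hab
    exact Subtype.ext (hpos a.1 b.1 a.2 b.2 (neg_inj.mp hab))
  obtain ⟨πN, hπN⟩ := exists_sort_perm _ hNinj
  obtain ⟨πP, hπP⟩ := exists_sort_perm _ hPinj
  refine ⟨Equiv.Perm.subtypeCongr πP πN, ?_, ?_⟩
  · intro i
    by_cases hi : p i
    · rw [Equiv.Perm.subtypeCongr.left_apply _ _ hi]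
      exact ⟨fun _ => (πP ⟨i, hi⟩).2, fun _ => hi⟩
    · rw [Equiv.Perm.subtypeCongr.right_apply _ _ hi]
      constructor
      · intro h; exact absurd h hi
      · intro h; exact absurd ((πN ⟨i, hi⟩).2) (not_not.2 h)
  · intro i j hij
    constructor
    · intro hj
      have hi0 : (i:ℤ) < 0 := lt_trans hij hj
      have hpi : ¬ p i := by rw [hp]; omega
      have hpj : ¬ p j := by rw [hp]; omega
      simp only [Equiv.Perm.subtypeCongr.right_apply _ _ hpi,
        Equiv.Perm.subtypeCongr.right_apply _ _ hpj]
      exact hπN (show (⟨i, hpi⟩ : {i : Idx m n // ¬ p i}) < ⟨j, hpj⟩ from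
        Subtype.mk_lt_mk.2 (Subtype.mk_lt_mk.2 hij))
    · intro hi
      have hj0 : 0 < (j:ℤ) := lt_trans hi hij
      have hpi : p i := hi
      have hpj : p j := hj0
      simp only [Equiv.Perm.subtypeCongr.left_apply _ _ hpi,
        Equiv.Perm.subtypeCongr.left_apply _ _ hpj]
      have := hπP (show (⟨i, hpi⟩ : {i : Idx m n // p i}) < ⟨j, hpj⟩ from
        Subtype.mk_lt_mk.2 (Subtype.mk_lt_mk.2 hij))
      simp only [Function.comp_apply] at this
      omega

lemma conjDom_self {g : Zmn m n} (h : dominantZ g) : conjDom g :=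
  ⟨Equiv.refl _, fun _ => Iff.rfl, h⟩

end AuxDev
section AuxDev2

variable {m n : ℕ}

lemma idx_ne_of_signs {i j : Idx m n} (hi : (i:ℤ) < 0) (hj : 0 < (j:ℤ)) : i ≠ j := by
  intro h; subst h; omega

lemma dvec_apply_self (i : Idx m n) : dvec i i = isgn i := by simp [dvec]

lemma dvec_apply_ne {i k : Idx m n} (h : k ≠ i) : dvec i k = 0 := by simp [dvec, h]

lemma sub_shift_apply (f : Zmn m n) (a : ℕ) {i j : Idx m n} (hi : (i:ℤ) < 0) (hj : 0 < (j:ℤ))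
    (k : Idx m n) :
    (f - a • (dvec i - dvec j)) k =
      if k = i then f k + a else if k = j then f k + a else f k := by
  have hij : i ≠ j := idx_ne_of_signs hi hj
  by_cases hki : k = i
  · subst hki
    simp [Pi.sub_apply, Pi.smul_apply, dvec_apply_self, dvec_apply_ne hij, isgn,
      not_lt.2 (le_of_lt hi), smul_eq_mul]
    try ring
  · by_cases hkj : k = j
    · subst hkj
      simp [Pi.sub_apply, Pi.smul_apply, dvec_apply_self, dvec_apply_ne (Ne.symm hij), isgn, hj,
        hki, smul_eq_mul]
      try ring
    · simp [Pi.sub_apply, Pi.smul_apply, dvec_apply_ne hki, dvec_apply_ne hkj, hki, hkj]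

lemma add_shift_apply (f : Zmn m n) (a : ℕ) {i j : Idx m n} (hi : (i:ℤ) < 0) (hj : 0 < (j:ℤ))
    (k : Idx m n) :
    (f + a • (dvec i - dvec j)) k =
      if k = i then f k - a else if k = j then f k - a else f k := by
  have hij : i ≠ j := idx_ne_of_signs hi hj
  by_cases hki : k = i
  · subst hki
    simp [Pi.add_apply, Pi.smul_apply, dvec_apply_self, dvec_apply_ne hij, isgn,
      not_lt.2 (le_of_lt hi), smul_eq_mul]
    try ring
  · by_cases hkj : k = j
    · subst hkj
      simp [Pi.add_apply, Pi.smul_apply, dvec_apply_self, dvec_apply_ne (Ne.symm hij), isgn, hj,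
        hki, smul_eq_mul]
      try ring
    · simp [Pi.add_apply, Pi.smul_apply, dvec_apply_ne hki, dvec_apply_ne hkj, hki, hkj]

/-- A bound beyond which shifting positions `i, j` preserves `conjDom`. -/
noncomputable def BB (h : Zmn m n) (i j : Idx m n) : ℕ :=
  (Finset.univ.sup fun k : Idx m n => (h k - h i).natAbs ⊔ (h k - h j).natAbs) + 1

lemma conjDom_shift_of_big {h : Zmn m n} (hc : conjDom h) {i j : Idx m n}
    (hi : (i:ℤ) < 0) (hj : 0 < (j:ℤ)) (d : ℤ) (hd : (BB h i j : ℤ) ≤ |d|)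
    (h' : Zmn m n)
    (hh' : ∀ k, h' k = if k = i then h k + d else if k = j then h k + d else h k) :
    conjDom h' := by
  have key : ∀ k : Idx m n, d ≠ h k - h i ∧ d ≠ h k - h j := by
    intro k
    have hle : ((h k - h i).natAbs ⊔ (h k - h j).natAbs : ℕ) ≤
        Finset.univ.sup fun k : Idx m n => (h k - h i).natAbs ⊔ (h k - h j).natAbs :=
      Finset.le_sup (f := fun k : Idx m n => (h k - h i).natAbs ⊔ (h k - h j).natAbs)
        (Finset.mem_univ k)
    have h1 : (h k - h i).natAbs <
        (Finset.univ.sup fun k : Idx m n => (h k - h i).natAbs ⊔ (h k - h j).natAbs) + 1 :=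
      Nat.lt_succ_of_le (le_trans (le_max_left _ _) hle)
    have h2 : (h k - h j).natAbs <
        (Finset.univ.sup fun k : Idx m n => (h k - h i).natAbs ⊔ (h k - h j).natAbs) + 1 :=
      Nat.lt_succ_of_le (le_trans (le_max_right _ _) hle)
    have hBB : BB h i j =
        (Finset.univ.sup fun k : Idx m n => (h k - h i).natAbs ⊔ (h k - h j).natAbs) + 1 := rfl
    constructor
    · intro hdd
      rw [hdd, Int.abs_eq_natAbs] at hd
      have : BB h i j ≤ (h k - h i).natAbs := by exact_mod_cast hd
      omega
    · intro hdd
      rw [hdd, Int.abs_eq_natAbs] at hd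
      have : BB h i j ≤ (h k - h j).natAbs := by exact_mod_cast hd
      omega
  apply conjDom_of_inj
  · intro k₁ k₂ h₁ h₂ hg
    have hk₁j : k₁ ≠ j := idx_ne_of_signs h₁ hj
    have hk₂j : k₂ ≠ j := idx_ne_of_signs h₂ hj
    rw [hh' k₁, hh' k₂] at hg
    simp only [if_neg hk₁j, if_neg hk₂j] at hg
    by_cases e₁ : k₁ = i <;> by_cases e₂ : k₂ = i
    · rw [e₁, e₂]
    · rw [if_pos e₁, if_neg e₂] at hg
      exact absurd (by subst e₁; omega : d = h k₂ - h i) (key k₂).1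
    · rw [if_neg e₁, if_pos e₂] at hg
      exact absurd (by subst e₂; omega : d = h k₁ - h i) (key k₁).1
    · rw [if_neg e₁, if_neg e₂] at hg
      exact hc.negInj k₁ k₂ h₁ h₂ hg
  · intro k₁ k₂ h₁ h₂ hg
    have hk₁i : k₁ ≠ i := fun hcc => by subst hcc; omega
    have hk₂i : k₂ ≠ i := fun hcc => by subst hcc; omega
    rw [hh' k₁, hh' k₂] at hg
    simp only [if_neg hk₁i, if_neg hk₂i] at hg
    by_cases e₁ : k₁ = j <;> by_cases e₂ : k₂ = j
    · rw [e₁, e₂]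
    · rw [if_pos e₁, if_neg e₂] at hg
      exact absurd (by subst e₁; omega : d = h k₂ - h j) (key k₂).2
    · rw [if_neg e₁, if_pos e₂] at hg
      exact absurd (by subst e₂; omega : d = h k₁ - h j) (key k₁).2
    · rw [if_neg e₁, if_neg e₂] at hg
      exact hc.posInj k₁ k₂ h₁ h₂ hg

lemma conjDom_sub_big {h : Zmn m n} (hc : conjDom h) {i j : Idx m n}
    (hi : (i:ℤ) < 0) (hj : 0 < (j:ℤ)) {a : ℕ} (ha : BB h i j ≤ a) :
    conjDom (h - a • (dvec i - dvec j)) := by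
  refine conjDom_shift_of_big hc hi hj (a : ℤ) (by simp; exact_mod_cast ha) _ ?_
  intro k
  rw [sub_shift_apply h a hi hj k]

lemma conjDom_add_big {h : Zmn m n} (hc : conjDom h) {i j : Idx m n}
    (hi : (i:ℤ) < 0) (hj : 0 < (j:ℤ)) {a : ℕ} (ha : BB h i j ≤ a) :
    conjDom (h + a • (dvec i - dvec j)) := by
  refine conjDom_shift_of_big hc hi hj (-(a : ℤ)) (by simp; exact_mod_cast ha) _ ?_
  intro k
  rw [add_shift_apply h a hi hj k]
  by_cases hki : k = i
  · simp [hki, sub_eq_add_neg]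
  · by_cases hkj : k = j
    · simp [hki, hkj, sub_eq_add_neg]
    · simp [hki, hkj]

/-- The defining set for `Lop`. -/
def LSet (m n : ℕ) (i j : Idx m n) (f : Zmn m n) : Set ℕ :=
  {a : ℕ | 0 < a ∧ conjDom (f - a • (dvec i - dvec j)) ∧
      ∀ k l : Idx m n, (i:ℤ) < (k:ℤ) → (k:ℤ) < 0 → 0 < (l:ℤ) → (l:ℤ) < (j:ℤ) →
        f k = f l → conjDom (Lop m n k l f - a • (dvec i - dvec j))}

/-- The defining set for `Rop`. -/
def RSet (m n : ℕ) (i j : Idx m n) (f : Zmn m n) : Set ℕ :=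
  {b : ℕ | 0 < b ∧ conjDom (f + b • (dvec i - dvec j)) ∧
      ∀ k l : Idx m n, (k:ℤ) < (i:ℤ) → (j:ℤ) < (l:ℤ) →
        f k = f l → conjDom (Rop m n k l f + b • (dvec i - dvec j))}

lemma Lop_eq (i j : Idx m n) (f : Zmn m n) :
    Lop m n i j f = f - (sInf (LSet m n i j f)) • (dvec i - dvec j) := by
  rw [Lop]; rfl

lemma Rop_eq (i j : Idx m n) (f : Zmn m n) :
    Rop m n i j f = f + (sInf (RSet m n i j f)) • (dvec i - dvec j) := by
  rw [Rop]; rfl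

lemma Lop_conjDom {g : Zmn m n} (hc : conjDom g) (i j : Idx m n) :
    conjDom (Lop m n i j g) := by
  rw [Lop_eq]
  rcases Set.eq_empty_or_nonempty (LSet m n i j g) with he | hne
  · rw [he, Nat.sInf_empty]
    simpa using hc
  · exact (Nat.sInf_mem hne).2.1

lemma Rop_conjDom {g : Zmn m n} (hc : conjDom g) (i j : Idx m n) :
    conjDom (Rop m n i j g) := by
  rw [Rop_eq]
  rcases Set.eq_empty_or_nonempty (RSet m n i j g) with he | hne
  · rw [he, Nat.sInf_empty]
    simpa using hc
  · exact (Nat.sInf_mem hne).2.1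

lemma LSet_nonempty {g : Zmn m n} (hc : conjDom g) {i j : Idx m n}
    (hi : (i:ℤ) < 0) (hj : 0 < (j:ℤ)) : (LSet m n i j g).Nonempty := by
  classical
  set a₀ : ℕ := BB g i j ⊔
    (Finset.univ.sup fun kl : Idx m n × Idx m n => BB (Lop m n kl.1 kl.2 g) i j) with ha₀
  refine ⟨a₀, ?_, ?_, ?_⟩
  · have : 1 ≤ BB g i j := Nat.succ_le_succ (Nat.zero_le _)
    omega
  · exact conjDom_sub_big hc hi hj (le_max_left _ _)
  · intro k l _ _ _ _ _
    refine conjDom_sub_big (Lop_conjDom hc k l) hi hj ?_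
    calc BB (Lop m n k l g) i j
        ≤ Finset.univ.sup fun kl : Idx m n × Idx m n => BB (Lop m n kl.1 kl.2 g) i j :=
          Finset.le_sup (f := fun kl : Idx m n × Idx m n => BB (Lop m n kl.1 kl.2 g) i j)
            (Finset.mem_univ (k, l))
      _ ≤ a₀ := le_max_right _ _

lemma RSet_nonempty {g : Zmn m n} (hc : conjDom g) {i j : Idx m n}
    (hi : (i:ℤ) < 0) (hj : 0 < (j:ℤ)) : (RSet m n i j g).Nonempty := by
  classical
  set a₀ : ℕ := BB g i j ⊔
    (Finset.univ.sup fun kl : Idx m n × Idx m n => BB (Rop m n kl.1 kl.2 g) i j) with ha₀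
  refine ⟨a₀, ?_, ?_, ?_⟩
  · have : 1 ≤ BB g i j := Nat.succ_le_succ (Nat.zero_le _)
    omega
  · exact conjDom_add_big hc hi hj (le_max_left _ _)
  · intro k l _ _ _
    refine conjDom_add_big (Rop_conjDom hc k l) hi hj ?_
    calc BB (Rop m n k l g) i j
        ≤ Finset.univ.sup fun kl : Idx m n × Idx m n => BB (Rop m n kl.1 kl.2 g) i j :=
          Finset.le_sup (f := fun kl : Idx m n × Idx m n => BB (Rop m n kl.1 kl.2 g) i j)
            (Finset.mem_univ (k, l))
      _ ≤ a₀ := le_max_right _ _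

lemma Lop_apply_i {g : Zmn m n} (hc : conjDom g) {i j : Idx m n}
    (hi : (i:ℤ) < 0) (hj : 0 < (j:ℤ)) : g i < Lop m n i j g i := by
  have hpos : 0 < sInf (LSet m n i j g) := (Nat.sInf_mem (LSet_nonempty hc hi hj)).1
  rw [Lop_eq, sub_shift_apply g _ hi hj i, if_pos rfl]
  omega

lemma Rop_apply_i {g : Zmn m n} (hc : conjDom g) {i j : Idx m n}
    (hi : (i:ℤ) < 0) (hj : 0 < (j:ℤ)) : Rop m n i j g i < g i := by
  have hpos : 0 < sInf (RSet m n i j g) := (Nat.sInf_mem (RSet_nonempty hc hi hj)).1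
  rw [Rop_eq, add_shift_apply g _ hi hj i, if_pos rfl]
  omega

lemma Lop_apply_ne {g : Zmn m n} {i j k : Idx m n} (hki : k ≠ i) (hkj : k ≠ j) :
    Lop m n i j g k = g k := by
  rw [Lop_eq, Pi.sub_apply, Pi.smul_apply, Pi.sub_apply, dvec_apply_ne hki, dvec_apply_ne hkj]
  simp

lemma Rop_apply_ne {g : Zmn m n} {i j k : Idx m n} (hki : k ≠ i) (hkj : k ≠ j) :
    Rop m n i j g k = g k := by
  rw [Rop_eq, Pi.add_apply, Pi.smul_apply, Pi.sub_apply, dvec_apply_ne hki, dvec_apply_ne hkj]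
  simp

end AuxDev2
section AuxDev3

variable {m n : ℕ}

lemma domConj_spec {g : Zmn m n} (h : conjDom g) :
    ∃ e : Equiv.Perm (Idx m n), blockPerm e ∧ domConj g = fun i => g (e i) := by
  refine ⟨h.choose, h.choose_spec.1, ?_⟩
  simp only [domConj, dif_pos h]

lemma fold_conjDom {r : ℕ} (T : Fin r → Zmn m n → Zmn m n)
    (hA2 : ∀ t g, conjDom g → conjDom (T t g)) :
    ∀ (Q : List (Fin r)) (g : Zmn m n), conjDom g →
      conjDom (Q.foldl (fun h t => T t h) g) := by
  intro Q
  induction Q with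
  | nil => intro g hg; exact hg
  | cons t Q' ih => intro g hg; exact ih (T t g) (hA2 t g hg)

lemma fold_fix {r : ℕ} (T : Fin r → Zmn m n → Zmn m n) (k : Idx m n)
    (hfix : ∀ t g, T t g k = g k) :
    ∀ (Q : List (Fin r)) (g : Zmn m n), (Q.foldl (fun h t => T t h) g) k = g k := by
  intro Q
  induction Q with
  | nil => intro g; rfl
  | cons t Q' ih => intro g; rw [List.foldl_cons, ih (T t g), hfix t g]

lemma fold_ne {r : ℕ} (I J : Fin r → Idx m n) (f : Zmn m n) (c : ℤ) (s : Fin r)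
    (T : Fin r → Zmn m n → Zmn m n) (after : Fin r → Prop)
    (hA1 : ∀ t g (k : Idx m n), k ≠ I t → k ≠ J t → T t g k = g k)
    (hA2 : ∀ t g, conjDom g → conjDom (T t g))
    (hB3 : ∀ g, conjDom g → g (I s) = c → T s g (I s) ≠ c)
    (hB4 : ∀ t g, after t → t ≠ s → conjDom g → g (I t) = f (I t) → T t g (I t) ≠ c)
    (hIneg : ∀ t, (I t : ℤ) < 0) (hJpos : ∀ t, 0 < (J t : ℤ))
    (hIinj : Function.Injective I)
    (hc : c = f (I s)) :
    ∀ (Q : List (Fin r)), Q.Nodup → Q.Pairwise (fun a b => a = s → after b) →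
      ∀ g : Zmn m n, conjDom g → (∀ t ∈ Q, g (I t) = f (I t)) →
      ((s ∈ Q ∧ ∀ k : Idx m n, (k:ℤ) < 0 → g k = c → k = I s) ∨
       (s ∉ Q ∧ (∀ t ∈ Q, after t) ∧ ∀ k : Idx m n, (k:ℤ) < 0 → g k ≠ c)) →
      ∀ k : Idx m n, (k:ℤ) < 0 → (Q.foldl (fun h t => T t h) g) k ≠ c := by
  intro Q
  induction Q with
  | nil =>
    intro _ _ g _ _ hcase k hk
    rcases hcase with ⟨hmem, _⟩ | ⟨_, _, hR⟩
    · simp at hmem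
    · exact hR k hk
  | cons t Q' ih =>
    intro hnd hpw g hcd hun hcase k hk
    simp only [List.foldl_cons]
    have htQ' : t ∉ Q' := (List.nodup_cons.1 hnd).1
    have hndQ' : Q'.Nodup := (List.nodup_cons.1 hnd).2
    have hpwhd : ∀ b ∈ Q', t = s → after b := (List.pairwise_cons.1 hpw).1
    have hpwQ' : Q'.Pairwise (fun a b => a = s → after b) := (List.pairwise_cons.1 hpw).2
    have hcd' : conjDom (T t g) := hA2 t g hcd
    have hun' : ∀ t' ∈ Q', (T t g) (I t') = f (I t') := by
      intro t' ht'
      have h1 : I t' ≠ I t := fun hh => htQ' (by rw [← hIinj hh]; exact ht')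
      rw [hA1 t g (I t') h1 (idx_ne_of_signs (hIneg t') (hJpos t))]
      exact hun t' (List.mem_cons_of_mem _ ht')
    refine ih hndQ' hpwQ' (T t g) hcd' hun' ?_ k hk
    rcases hcase with ⟨hsmem, hL⟩ | ⟨hsn, haf, hR⟩
    · rcases List.mem_cons.1 hsmem with hts | hsQ'
      · -- t = s : flip to the right case
        right
        refine ⟨by rw [hts]; exact htQ', fun b hb => hpwhd b hb hts.symm, ?_⟩
        intro k' hk' hkc
        by_cases hki : k' = I s
        · subst hki
        
          rw [← hts] at hkc
          exact hB3 g hcd (by rw [hun s hsmem, hc]) (by rw [hts] at hkc ⊢; exact hkc)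
        · have heq : (T t g) k' = g k' := by
            refine hA1 t g k' ?_ (idx_ne_of_signs hk' (hJpos t))
            rw [← hts]; exact hki
          rw [heq] at hkc
          exact hki (hL k' hk' hkc)
      · -- s stays in the tail
        have hts : t ≠ s := fun hh => htQ' (hh ▸ hsQ')
        left
        refine ⟨hsQ', ?_⟩
        intro k' hk' hkc
        have hIsval : (T t g) (I s) = c := by
          rw [hA1 t g (I s) (fun hh => hts (hIinj hh).symm)
            (idx_ne_of_signs (hIneg s) (hJpos t)), hun s hsmem, hc]
        by_cases hki : k' = I t
        · exact hcd'.negInj k' (I s) hk' (hIneg s) (hkc.trans hIsval.symm)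
        · rw [hA1 t g k' hki (idx_ne_of_signs hk' (hJpos t))] at hkc
          exact hL k' hk' hkc
    · -- s already processed
      right
      have htmem : t ∈ t :: Q' := List.mem_cons_self
      have hts : t ≠ s := fun hh => hsn (hh ▸ htmem)
      refine ⟨fun hh => hsn (List.mem_cons_of_mem _ hh),
        fun b hb => haf b (List.mem_cons_of_mem _ hb), ?_⟩
      intro k' hk' hkc
      by_cases hki : k' = I t
      · subst hki
        exact hB4 t g (haf t htmem) hts hcd (hun t htmem) hkc
      · rw [hA1 t g k' hki (idx_ne_of_signs hk' (hJpos t))] at hkc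
        exact hR k' hk' hkc

end AuxDev3
section AuxDev4

variable {m n : ℕ}

lemma blockPerm_neg {e : Equiv.Perm (Idx m n)} (hb : blockPerm e) {k : Idx m n}
    (hk : (k:ℤ) < 0) : ((e k : Idx m n) : ℤ) < 0 := by
  rw [idx_neg_iff] at hk ⊢
  exact fun hc => hk ((hb k).2 hc)

lemma L_key {r : ℕ} (f : Zmn m n) (hf : dominantZ f) (I J : Fin r → Idx m n)
    (hIJ : pairFamily f r I J) (θ : Fin r → ℕ) (hθ : ∀ s, θ s ≤ 1) (s : Fin r) :
    (∃ k : Idx m n, (k:ℤ) < 0 ∧ Ltheta I J θ f k = f (I s)) ↔ θ s = 0 := by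
  obtain ⟨hImono, hJanti, hIneg, hJpos, hval⟩ := hIJ
  have hIinj : Function.Injective I := fun a b hab => hImono.injective (by rw [hab])
  set T : Fin r → Zmn m n → Zmn m n := fun t => (Lop m n (I t) (J t))^[θ t] with hT
  have hA1 : ∀ t g (k : Idx m n), k ≠ I t → k ≠ J t → T t g k = g k := by
    intro t g k h1 h2
    rcases Nat.le_one_iff_eq_zero_or_eq_one.1 (hθ t) with h | h <;>
      simp [hT, h, Lop_apply_ne h1 h2]
  have hA2 : ∀ t g, conjDom g → conjDom (T t g) := by
    intro t g hg
    rcases Nat.le_one_iff_eq_zero_or_eq_one.1 (hθ t) with h | h <;>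
      simp only [hT, h, Function.iterate_zero, Function.iterate_one, id_eq]
    · exact hg
    · exact Lop_conjDom hg _ _
  set G : Zmn m n := (List.finRange r).foldl (fun h t => T t h) f with hGdef
  have hGapp : applyFwd (fun s => (Lop m n (I s) (J s))^[θ s]) f = G := rfl
  have hcdG : conjDom G := fold_conjDom T hA2 _ f (conjDom_self hf)
  obtain ⟨e, hbe, hde⟩ := domConj_spec hcdG
  have hLt : Ltheta I J θ f = fun i => G (e i) := by
    rw [Ltheta, hGapp, hde]
  constructor
  · rintro ⟨k, hk, hkc⟩
    by_contra h0
    have hθs : θ s = 1 := by have := hθ s; omega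
    have hB3 : ∀ g, conjDom g → g (I s) = f (I s) → T s g (I s) ≠ f (I s) := by
      intro g hcd hgs
      have := Lop_apply_i hcd (hIneg s) (hJpos s)
      simp only [hT, hθs, Function.iterate_one]
      omega
    have hB4 : ∀ t g, s < t → t ≠ s → conjDom g → g (I t) = f (I t) →
        T t g (I t) ≠ f (I s) := by
      intro t g hst hts hcd hgt
      have hfst : f (I s) < f (I t) := (hf (I s) (I t) (hImono hst)).1 (hIneg t)
      rcases Nat.le_one_iff_eq_zero_or_eq_one.1 (hθ t) with h | h
      · simp only [hT, h, Function.iterate_zero, id_eq]; omega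
      · have := Lop_apply_i hcd (hIneg t) (hJpos t)
        simp only [hT, h, Function.iterate_one]
        omega
    have hpw : (List.finRange r).Pairwise (fun a b => a = s → s < b) :=
      (List.pairwise_lt_finRange r).imp fun hab ha => ha ▸ hab
    have hne := fold_ne I J f (f (I s)) s T (fun t => s < t) hA1 hA2 hB3 hB4
      hIneg hJpos hIinj rfl (List.finRange r) (List.nodup_finRange r) hpw f
      (conjDom_self hf) (fun t _ => rfl)
      (Or.inl ⟨List.mem_finRange s,
        fun k hk hkc => hf.negInj k (I s) hk (hIneg s) hkc⟩)
    have hek : ((e k : Idx m n) : ℤ) < 0 := blockPerm_neg hbe hk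
    rw [hLt] at hkc
    exact hne (e k) hek hkc
  · intro h0
    have hfix : ∀ t g, T t g (I s) = g (I s) := by
      intro t g
      by_cases hts : t = s
      · subst hts; simp [hT, h0]
      · exact hA1 t g (I s) (fun hh => hts (hIinj hh).symm)
          (idx_ne_of_signs (hIneg s) (hJpos t))
    have hGs : G (I s) = f (I s) := fold_fix T (I s) hfix _ f
    refine ⟨e.symm (I s), blockPerm_neg (blockPerm.symm hbe) (hIneg s), ?_⟩
    rw [hLt]
    simp only [Equiv.apply_symm_apply]
    exact hGs

lemma R_key {r : ℕ} (f : Zmn m n) (hf : dominantZ f) (I J : Fin r → Idx m n)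
    (hIJ : pairFamily f r I J) (θ : Fin r → ℕ) (hθ : ∀ s, θ s ≤ 1) (s : Fin r) :
    (∃ k : Idx m n, (k:ℤ) < 0 ∧ Rtheta I J θ f k = f (I s)) ↔ θ s = 0 := by
  obtain ⟨hImono, hJanti, hIneg, hJpos, hval⟩ := hIJ
  have hIinj : Function.Injective I := fun a b hab => hImono.injective (by rw [hab])
  set T : Fin r → Zmn m n → Zmn m n := fun t => (Rop m n (I t) (J t))^[θ t] with hT
  have hA1 : ∀ t g (k : Idx m n), k ≠ I t → k ≠ J t → T t g k = g k := by
    intro t g k h1 h2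
    rcases Nat.le_one_iff_eq_zero_or_eq_one.1 (hθ t) with h | h <;>
      simp [hT, h, Rop_apply_ne h1 h2]
  have hA2 : ∀ t g, conjDom g → conjDom (T t g) := by
    intro t g hg
    rcases Nat.le_one_iff_eq_zero_or_eq_one.1 (hθ t) with h | h <;>
      simp only [hT, h, Function.iterate_zero, Function.iterate_one, id_eq]
    · exact hg
    · exact Rop_conjDom hg _ _
  set G : Zmn m n := (List.finRange r).reverse.foldl (fun h t => T t h) f with hGdef
  have hGapp : applyBwd (fun s => (Rop m n (I s) (J s))^[θ s]) f = G := rfl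
  have hcdG : conjDom G := fold_conjDom T hA2 _ f (conjDom_self hf)
  obtain ⟨e, hbe, hde⟩ := domConj_spec hcdG
  have hLt : Rtheta I J θ f = fun i => G (e i) := by
    rw [Rtheta, hGapp, hde]
  constructor
  · rintro ⟨k, hk, hkc⟩
    by_contra h0
    have hθs : θ s = 1 := by have := hθ s; omega
    have hB3 : ∀ g, conjDom g → g (I s) = f (I s) → T s g (I s) ≠ f (I s) := by
      intro g hcd hgs
      have := Rop_apply_i hcd (hIneg s) (hJpos s)
      simp only [hT, hθs, Function.iterate_one]
      omega
    have hB4 : ∀ t g, t < s → t ≠ s → conjDom g → g (I t) = f (I t) →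
        T t g (I t) ≠ f (I s) := by
      intro t g hst hts hcd hgt
      have hfst : f (I t) < f (I s) := (hf (I t) (I s) (hImono hst)).1 (hIneg s)
      rcases Nat.le_one_iff_eq_zero_or_eq_one.1 (hθ t) with h | h
      · simp only [hT, h, Function.iterate_zero, id_eq]; omega
      · have := Rop_apply_i hcd (hIneg t) (hJpos t)
        simp only [hT, h, Function.iterate_one]
        omega
    have hpw : (List.finRange r).reverse.Pairwise (fun a b => a = s → b < s) := by
      rw [List.pairwise_reverse]
      exact (List.pairwise_lt_finRange r).imp fun hab hb => hb ▸ hab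
    have hne := fold_ne I J f (f (I s)) s T (fun t => t < s) hA1 hA2 hB3 hB4
      hIneg hJpos hIinj rfl (List.finRange r).reverse
      (List.nodup_reverse.2 (List.nodup_finRange r)) hpw f
      (conjDom_self hf) (fun t _ => rfl)
      (Or.inl ⟨List.mem_reverse.2 (List.mem_finRange s),
        fun k hk hkc => hf.negInj k (I s) hk (hIneg s) hkc⟩)
    have hek : ((e k : Idx m n) : ℤ) < 0 := blockPerm_neg hbe hk
    rw [hLt] at hkc
    exact hne (e k) hek hkc
  · intro h0
    have hfix : ∀ t g, T t g (I s) = g (I s) := by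
      intro t g
      by_cases hts : t = s
      · subst hts; simp [hT, h0]
      · exact hA1 t g (I s) (fun hh => hts (hIinj hh).symm)
          (idx_ne_of_signs (hIneg s) (hJpos t))
    have hGs : G (I s) = f (I s) := fold_fix T (I s) hfix _ f
    refine ⟨e.symm (I s), blockPerm_neg (blockPerm.symm hbe) (hIneg s), ?_⟩
    rw [hLt]
    simp only [Equiv.apply_symm_apply]
    exact hGs

end AuxDev4

/-- the maps `θ ↦ L_θ(f)` and `θ ↦ R_θ(f)` are injective on `{0,1}^r`. -/
theorem Ltheta_Rtheta_injective {m n r : ℕ} (f : Zmn m n) (hf : dominantZ f)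
    (hr : r = atyp f) (I J : Fin r → Idx m n) (hIJ : pairFamily f r I J)
    (θ φ : Fin r → ℕ) (hθ : ∀ s, θ s ≤ 1) (hφ : ∀ s, φ s ≤ 1) :
    (Ltheta I J θ f = Ltheta I J φ f → θ = φ) ∧
    (Rtheta I J θ f = Rtheta I J φ f → θ = φ) := by
  constructor
  · intro heq
    funext s
    have h1 := L_key f hf I J hIJ θ hθ s
    have h2 := L_key f hf I J hIJ φ hφ s
    rw [heq] at h1
    have := h1.symm.trans h2
    have hθs := hθ s
    have hφs := hφ s
    rcases Nat.le_one_iff_eq_zero_or_eq_one.1 hθs with h | h <;>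
      rcases Nat.le_one_iff_eq_zero_or_eq_one.1 hφs with h' | h' <;>
      omega
  · intro heq
    funext s
    have h1 := R_key f hf I J hIJ θ hθ s
    have h2 := R_key f hf I J hIJ φ hφ s
    rw [heq] at h1
    have := h1.symm.trans h2
    have hθs := hθ s
    have hφs := hφ s
    rcases Nat.le_one_iff_eq_zero_or_eq_one.1 hθs with h | h <;>
      rcases Nat.le_one_iff_eq_zero_or_eq_one.1 hφs with h' | h' <;>
      omega
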